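/- arXiv:2007.11518 — 2 statements merged into one kernel-verified Lean document; each statement's English description precedes it below -/
import Mathlib

section
/- Let A be a 2×2 integer matrix with determinant 1 and trace > 2, and let ℰ ⊆ 𝕋² be a finite f_A-invariant set. Then there are finitely many orbits of primitive ℰ-rectangles under the group G: there exists a finite set F of rectangles such that every primitive positive ℰ-rectangle and every primitive negative ℰ-rectangle is the image g(R) of some rectangle R ∈ F under some element g ∈ G. -/
/- Common setup: following the paper, we identify each subset of the torus
`𝕋² = ℝ²/ℤ²` with its (`ℤ²`-saturated) lift to `ℝ²`. -/

open Matrix Set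
open scoped Pointwise

namespace Paper

/-- Points of the plane ℝ². -/
abbrev V : Type := Fin 2 → ℝ

/-- The integer lattice ℤ² ⊆ ℝ². -/
def lattice : Set V := Set.range fun m : Fin 2 → ℤ => fun i => (m i : ℝ)

/-- The linear action of an integer matrix on ℝ². -/
def actR (A : Matrix (Fin 2) (Fin 2) ℤ) (v : V) : V :=
  (A.map (Int.cast : ℤ → ℝ)).mulVec v

/-- `E ⊆ ℝ²` is the lift of a finite subset of the torus. -/
def IsTorusFinite (E : Set V) : Prop := ∃ F : Set V, F.Finite ∧ E = F + lattice

/-- `E` is the lift of an `f_A`-invariant subset of the torus. -/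
def IsInvariant (A : Matrix (Fin 2) (Fin 2) ℤ) (E : Set V) : Prop := actR A '' E = E

/-- `E` is the lift of a periodic orbit of `f_A`. -/
def IsPeriodicOrbit (A : Matrix (Fin 2) (Fin 2) ℤ) (E : Set V) : Prop :=
  ∃ x : V, ∃ p : ℕ, 0 < p ∧ (actR A)^[p] x - x ∈ lattice ∧
    E = {v | ∃ i : ℕ, v - (actR A)^[i] x ∈ lattice}

/-- A rectangle `R(p; s, u)`, recorded via its basepoint `p` and its side
lengths `s, u > 0` (in the directions of the fixed eigenvectors `v^s, v^u`). -/
structure Rect where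
  p : V
  s : ℝ
  u : ℝ
  s_pos : 0 < s
  u_pos : 0 < u

namespace Rect

/-- The set of points of the rectangle `R(p;s,u)`. -/
def carrier (vs vu : V) (R : Rect) : Set V :=
  {q | ∃ a b : ℝ, 0 ≤ a ∧ a ≤ R.s ∧ 0 ≤ b ∧ b ≤ R.u ∧ q = R.p + a • vs + b • vu}

/-- Endpoint of the increasing diagonal (whose origin is `R.p`). -/
def incEnd (vs vu : V) (R : Rect) : V := R.p + R.s • vs + R.u • vu

/-- Origin of the decreasing diagonal. -/
def decOrigin (vs : V) (R : Rect) : V := R.p + R.s • vs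

/-- Endpoint of the decreasing diagonal. -/
def decEnd (vu : V) (R : Rect) : V := R.p + R.u • vu

/-- `R` is a positive `E`-rectangle. -/
def IsPos (vs vu : V) (E : Set V) (R : Rect) : Prop :=
  R.p ∈ E ∧ R.incEnd vs vu ∈ E

/-- `R` is a negative `E`-rectangle. -/
def IsNeg (vs vu : V) (E : Set V) (R : Rect) : Prop :=
  R.decOrigin vs ∈ E ∧ R.decEnd vu ∈ E

/-- `R` is a primitive positive `E`-rectangle. -/
def IsPrimPos (vs vu : V) (E : Set V) (R : Rect) : Prop :=
  R.IsPos vs vu E ∧ R.carrier vs vu ∩ E = {R.p, R.incEnd vs vu}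

/-- `R` is a primitive negative `E`-rectangle. -/
def IsPrimNeg (vs vu : V) (E : Set V) (R : Rect) : Prop :=
  R.IsNeg vs vu E ∧ R.carrier vs vu ∩ E = {R.decOrigin vs, R.decEnd vu}

/-- Bottom stable side of a rectangle. -/
def botSide (vs : V) (R : Rect) : Set V :=
  {q | ∃ a : ℝ, 0 ≤ a ∧ a ≤ R.s ∧ q = R.p + a • vs}

/-- Top stable side of a rectangle. -/
def topSide (vs vu : V) (R : Rect) : Set V :=
  {q | ∃ a : ℝ, 0 ≤ a ∧ a ≤ R.s ∧ q = R.p + a • vs + R.u • vu}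

/-- Left unstable side of a rectangle. -/
def leftSide (vu : V) (R : Rect) : Set V :=
  {q | ∃ b : ℝ, 0 ≤ b ∧ b ≤ R.u ∧ q = R.p + b • vu}

/-- Interior of a rectangle. -/
def interior (vs vu : V) (R : Rect) : Set V :=
  {q | ∃ a b : ℝ, 0 < a ∧ a < R.s ∧ 0 < b ∧ b < R.u ∧ q = R.p + a • vs + b • vu}

end Rect

/-- The (closed) quadrant `C₊₊(x)`. -/
def quadPP (vs vu x : V) : Set V :=
  {q | ∃ a b : ℝ, 0 ≤ a ∧ 0 ≤ b ∧ q = x + a • vs + b • vu}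

/-- `D` is a right horizontal subrectangle of `R`. -/
def IsRightHorizSub (vs : V) (D R : Rect) : Prop :=
  D.s ≤ R.s ∧ D.u = R.u ∧ D.p = R.p + (R.s - D.s) • vs

/-- A positive `X`-string with origin `x`: a sequence of positive `X`-rectangles,
the first one having `x` as origin of its increasing diagonal, consecutive ones
meeting exactly at one point which is the endpoint of the increasing diagonal of
the former and the origin of the increasing diagonal of the latter. -/
def IsPosString (vs vu : V) (X : Set V) (x : V) (R : ℕ → Rect) : Prop :=
  (∀ i, (R i).IsPos vs vu X) ∧ (R 0).p = x ∧
    ∀ i, (R i).carrier vs vu ∩ (R (i + 1)).carrier vs vu = {(R i).incEnd vs vu} ∧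
      (R (i + 1)).p = (R i).incEnd vs vu

/-- A positive `X`-staircase with origin `x`. -/
def IsPosStaircase (vs vu : V) (X : Set V) (x : V) (R : ℕ → Rect) : Prop :=
  (∀ i, (R i).carrier vs vu ⊆ quadPP vs vu x) ∧
    ∃ Del : ℕ → Rect, IsPosString vs vu X x Del ∧ R 0 = Del 0 ∧
      (∀ i, 1 ≤ i → IsRightHorizSub vs (Del i) (R i)) ∧
      (∀ i, (R i).topSide vs vu ⊆ (R (i + 1)).botSide vs) ∧
      ∃ C : ℝ, ∀ i, (Del (i + 1)).s / (Del i).s ≤ C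

/-- Stable side lengths of the primitive positive `(X, x)`-rectangles. -/
def baseLengths (vs vu : V) (X : Set V) (x : V) : Set ℝ :=
  {s | ∃ R : Rect, R.IsPrimPos vs vu X ∧ R.p = x ∧ R.s = s}

/-- The Euclidean norm of a point of ℝ². -/
noncomputable def euclNorm (v : V) : ℝ := Real.sqrt ((v 0) ^ 2 + (v 1) ^ 2)

/-- `Y` is the lift of an `ε`-dense subset of the torus, for the metric on the
torus induced by the Euclidean metric of ℝ². -/
def EDense (ε : ℝ) (Y : Set V) : Prop := ∀ v : V, ∃ y ∈ Y, euclNorm (v - y) ≤ ε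

/-- The lift of `{(0,1/2), (1/2,0), (1/2,1/2)}`, i.e. the set
`{(0,1/2), (1/2,0), (1/2,1/2)} + ℤ²`. -/
def halfPoints : Set V :=
  {v : V | ∃ w ∈ ({![0, 1/2], ![1/2, 0], ![1/2, 1/2]} : Set V), v - w ∈ lattice}

/-- The lift of the point `(1/2,1/2)` of the torus, i.e. `(1/2,1/2) + ℤ²`. -/
def halfCenter : Set V := {v : V | v - ![1/2, 1/2] ∈ lattice}

/-- `A^k` acting linearly on ℝ², for `k : ℤ` (the real matrix is invertible
since `det A = 1`). -/
noncomputable def actRZ (A : Matrix (Fin 2) (Fin 2) ℤ) (k : ℤ) (v : V) : V :=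
  ((A.map (Int.cast : ℤ → ℝ)) ^ k).mulVec v

/-- Membership in the group `G` of affine transformations of ℝ² generated by
the linear map induced by `A` and the translations by vectors of `ℤ²`: these
are exactly the maps `v ↦ A^k v + z` with `k : ℤ` and `z ∈ ℤ²`. -/
def GElem (A : Matrix (Fin 2) (Fin 2) ℤ) (g : V → V) : Prop :=
  ∃ k : ℤ, ∃ z ∈ lattice, ∀ v : V, g v = actRZ A k v + z

end Paper

/-! A nonempty `ℤ²`-periodic set meets the interior of every rectangle whose two sides both
exceed some constant `K`, so a primitive rectangle has a side shorter than `K`. Conjugating by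
`A^k` multiplies the two sides by `lam^(-k)` and `lam^k` and keeps the area, so primitive
rectangles also have area at most `lam * K^2`. Modulo `G` one may then take the stable side in
`[1, lam)` and the base point in a finite set of representatives of `E`; the unstable side is
then bounded, so both diagonal endpoints lie in a finite set. -/

namespace Matrix

variable {n : Type*} [Fintype n] [DecidableEq n]

lemma zpow_mulVec_mem {R : Type*} [CommRing R] {M : Matrix n n R} (hM : IsUnit M.det)
    {S : Set (n → R)} (hS : ∀ v ∈ S, M *ᵥ v ∈ S) (hS' : ∀ v ∈ S, M⁻¹ *ᵥ v ∈ S)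
    (k : ℤ) :
    ∀ v ∈ S, (M ^ k) *ᵥ v ∈ S := by
  induction k using Int.induction_on with
  | zero => simp
  | succ k ih =>
    intro v hv
    rw [zpow_add_one hM, ← mulVec_mulVec]
    exact ih _ (hS v hv)
  | pred k ih =>
    intro v hv
    rw [zpow_sub_one hM, ← mulVec_mulVec]
    exact ih _ (hS' v hv)

lemma zpow_mulVec_image_eq {R : Type*} [CommRing R] {M : Matrix n n R} (hM : IsUnit M.det)
    {S : Set (n → R)} (hS : (M *ᵥ ·) '' S = S) (k : ℤ) : (M ^ k *ᵥ ·) '' S = S := by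
  have hS' : ∀ v ∈ S, M⁻¹ *ᵥ v ∈ S := by
    intro w hw
    obtain ⟨v, hv, rfl⟩ := hS.symm ▸ hw
    rwa [mulVec_mulVec, nonsing_inv_mul _ hM, one_mulVec]
  have hmaps (j : ℤ) : ∀ v ∈ S, M ^ j *ᵥ v ∈ S :=
    zpow_mulVec_mem hM (fun v hv => hS ▸ ⟨v, hv, rfl⟩) hS' j
  refine (Set.image_subset_iff.mpr (hmaps k)).antisymm fun v hv =>
    ⟨M ^ (-k) *ᵥ v, hmaps _ v hv, ?_⟩
  rw [mulVec_mulVec, ← zpow_add hM, add_neg_cancel, zpow_zero, one_mulVec]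

lemma zpow_mulVec_of_mulVec_eq_smul {K : Type*} [Field K] {M : Matrix n n K}
    (hM : IsUnit M.det) {μ : K} (hμ : μ ≠ 0) {v : n → K} (hv : M *ᵥ v = μ • v)
    (k : ℤ) : (M ^ k) *ᵥ v = μ ^ k • v := by
  have hv' : M⁻¹ *ᵥ v = μ⁻¹ • v := by
    rw [eq_inv_smul_iff₀ hμ, ← mulVec_smul, ← hv, mulVec_mulVec, nonsing_inv_mul _ hM,
      one_mulVec]
  induction k using Int.induction_on with
  | zero => simp
  | succ k ih =>
    rw [zpow_add_one hM, ← mulVec_mulVec, hv, mulVec_smul, ih, smul_smul, zpow_add_one₀ hμ,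
      mul_comm]
  | pred k ih =>
    rw [zpow_sub_one hM, ← mulVec_mulVec, hv', mulVec_smul, ih, smul_smul, zpow_sub_one₀ hμ,
      mul_comm]

end Matrix

lemma exists_zpow_neg_mul_mem_Ico {lam x c : ℝ} (hlam : 1 < lam) (hx : 0 < x) (hc : 0 < c) :
    ∃ k : ℤ, c ≤ lam ^ (-k) * x ∧ lam ^ (-k) * x < lam * c := by
  obtain ⟨k, hk1, hk2⟩ := exists_mem_Ico_zpow (div_pos hx hc) hlam
  have hpos : 0 < lam ^ k := zpow_pos (zero_lt_one.trans hlam) k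
  refine ⟨k, ?_, ?_⟩
  · rw [_root_.zpow_neg, inv_mul_eq_div, le_div_iff₀ hpos, mul_comm]
    exact (le_div_iff₀ hc).mp hk1
  · rw [_root_.zpow_neg, inv_mul_eq_div, div_lt_iff₀ hpos]
    rw [zpow_add_one₀ (zero_lt_one.trans hlam).ne', div_lt_iff₀ hc] at hk2
    linarith

namespace Paper

variable {A : Matrix (Fin 2) (Fin 2) ℤ} {lam : ℝ} {vs vu : V} {E : Set V}

attribute [ext] Rect

lemma zero_mem_lattice : (0 : V) ∈ lattice := ⟨0, by ext; simp⟩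

lemma add_mem_lattice {x y : V} (hx : x ∈ lattice) (hy : y ∈ lattice) : x + y ∈ lattice := by
  obtain ⟨m, rfl⟩ := hx
  obtain ⟨n, rfl⟩ := hy
  exact ⟨m + n, by ext; simp⟩

lemma neg_mem_lattice {x : V} (hx : x ∈ lattice) : -x ∈ lattice := by
  obtain ⟨m, rfl⟩ := hx
  exact ⟨-m, by ext; simp⟩

lemma map_mulVec_mem_lattice (B : Matrix (Fin 2) (Fin 2) ℤ) {x : V} (hx : x ∈ lattice) :
    B.map (Int.cast : ℤ → ℝ) *ᵥ x ∈ lattice := by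
  obtain ⟨m, rfl⟩ := hx
  exact ⟨B *ᵥ m, by ext i; simp [Matrix.mulVec, dotProduct]⟩

lemma isUnit_det_map (hdet : A.det = 1) : IsUnit (A.map (Int.cast : ℤ → ℝ)).det := by
  rw [← Int.cast_det, hdet, Int.cast_one]
  exact isUnit_one

lemma map_inv_eq_map_adjugate (hdet : A.det = 1) :
    (A.map (Int.cast : ℤ → ℝ))⁻¹ = A.adjugate.map (Int.cast : ℤ → ℝ) := by
  rw [Matrix.inv_def, ← Int.cast_det, hdet, Int.cast_one, Ring.inverse_one, one_smul]
  exact ((Int.castRingHom ℝ).map_adjugate A).symm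

lemma actRZ_add (k : ℤ) (x y : V) : actRZ A k (x + y) = actRZ A k x + actRZ A k y :=
  Matrix.mulVec_add _ _ _

lemma actRZ_smul (k : ℤ) (c : ℝ) (x : V) : actRZ A k (c • x) = c • actRZ A k x :=
  Matrix.mulVec_smul _ _ _

lemma actRZ_mem_lattice (hdet : A.det = 1) (k : ℤ) {x : V} (hx : x ∈ lattice) :
    actRZ A k x ∈ lattice :=
  Matrix.zpow_mulVec_mem (isUnit_det_map hdet) (fun _ => map_mulVec_mem_lattice A)
    (fun _ => map_inv_eq_map_adjugate hdet ▸ map_mulVec_mem_lattice A.adjugate) k x hx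

lemma actRZ_image_of_isInvariant (hdet : A.det = 1) (hE : IsInvariant A E) (k : ℤ) :
    actRZ A k '' E = E :=
  Matrix.zpow_mulVec_image_eq (isUnit_det_map hdet) hE k

lemma actRZ_neg_actRZ (hdet : A.det = 1) (k : ℤ) (v : V) : actRZ A (-k) (actRZ A k v) = v := by
  rw [actRZ, actRZ, Matrix.mulVec_mulVec, ← Matrix.zpow_add (isUnit_det_map hdet),
    neg_add_cancel, zpow_zero, Matrix.one_mulVec]

noncomputable def gMap (A : Matrix (Fin 2) (Fin 2) ℤ) (k : ℤ) (z v : V) : V := actRZ A k v + z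

lemma gMap_inv_gMap (hdet : A.det = 1) (k : ℤ) (z v : V) :
    gMap A (-k) (-actRZ A (-k) z) (gMap A k z v) = v := by
  rw [gMap, gMap, actRZ_add, actRZ_neg_actRZ hdet]
  abel

lemma gElem_gMap {k : ℤ} {z : V} (hz : z ∈ lattice) : GElem A (gMap A k z) :=
  ⟨k, z, hz, fun _ => rfl⟩

lemma IsTorusFinite.add_mem (hE : IsTorusFinite E) {e z : V} (he : e ∈ E) (hz : z ∈ lattice) :
    e + z ∈ E := by
  obtain ⟨F, -, rfl⟩ := hE
  obtain ⟨f, hf, m, hm, rfl⟩ := he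
  exact ⟨f, hf, m + z, add_mem_lattice hm hz, (add_assoc f m z).symm⟩

lemma gMap_image_of_isInvariant (hdet : A.det = 1) (hE : IsTorusFinite E)
    (hEinv : IsInvariant A E) (k : ℤ) {z : V} (hz : z ∈ lattice) : gMap A k z '' E = E := by
  have htrans : (· + z) '' E = E :=
    (Set.image_subset_iff.mpr fun e he => hE.add_mem he hz).antisymm fun e he =>
      ⟨e + -z, hE.add_mem he (neg_mem_lattice hz), neg_add_cancel_right e z⟩
  rw [show gMap A k z = (· + z) ∘ actRZ A k from rfl, Set.image_comp,
    actRZ_image_of_isInvariant hdet hEinv, htrans]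

lemma mem_of_inter_eq_pair {α : Type*} {C S : Set α} {x y : α} (h : C ∩ S = {x, y}) :
    x ∈ S ∧ y ∈ S :=
  ⟨(h.superset (Set.mem_insert x {y})).2, (h.superset (Set.mem_insert_of_mem x rfl)).2⟩

lemma Rect.isPrimPos_iff {R : Rect} :
    R.IsPrimPos vs vu E ↔ R.carrier vs vu ∩ E = {R.p, R.incEnd vs vu} :=
  ⟨And.right, fun hR => ⟨mem_of_inter_eq_pair hR, hR⟩⟩

def Rect.reflect (v : V) (R : Rect) : Rect := { R with p := R.p + R.s • v }

lemma Rect.carrier_reflect (v w : V) (R : Rect) : (R.reflect v).carrier (-v) w = R.carrier v w := by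
  ext q
  constructor
  · rintro ⟨a, b, ha, has, hb, hbu, rfl⟩
    dsimp only [Rect.reflect] at has hbu ⊢
    exact ⟨R.s - a, b, by linarith, by linarith, hb, hbu, by module⟩
  · rintro ⟨a, b, ha, has, hb, hbu, rfl⟩
    simp only [Rect.carrier, Rect.reflect, Set.mem_ofPred_eq]
    exact ⟨R.s - a, b, by linarith, by linarith, hb, hbu, by module⟩

lemma Rect.isPrimNeg_iff_reflect {R : Rect} :
    R.IsPrimNeg vs vu E ↔ (R.reflect vs).IsPrimPos (-vs) vu E := by
  have hinc : (R.reflect vs).incEnd (-vs) vu = R.decEnd vu := by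
    simp only [Rect.incEnd, Rect.reflect, Rect.decEnd]; module
  rw [Rect.isPrimPos_iff, Rect.carrier_reflect, hinc]
  exact ⟨And.right, fun hR => ⟨mem_of_inter_eq_pair hR, hR⟩⟩

lemma exists_lattice_add_near (q c : V) : ∃ m ∈ lattice, ‖q + m - c‖ ≤ 1 / 2 := by
  refine ⟨fun i => (round (c i - q i) : ℝ), ⟨fun i => round (c i - q i), rfl⟩,
    (pi_norm_le_iff_of_nonneg (by norm_num)).mpr fun i => ?_⟩
  refine (abs_sub_round (c i - q i)).trans_eq' ?_
  rw [Real.norm_eq_abs, ← abs_neg]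
  congr 1
  simp only [Pi.sub_apply, Pi.add_apply]
  ring

lemma exists_coord_bound (hli : LinearIndependent ℝ ![vs, vu]) :
    ∃ K, 0 ≤ K ∧
      ∀ w : V, ∃ a b : ℝ, w = a • vs + b • vu ∧ |a| ≤ K * ‖w‖ ∧ |b| ≤ K * ‖w‖ := by
  let B := basisOfLinearIndependentOfCardEqFinrank hli (by simp)
  have hB : ⇑B = ![vs, vu] := coe_basisOfLinearIndependentOfCardEqFinrank hli _
  let e : V →L[ℝ] Fin 2 → ℝ := B.equivFun.toContinuousLinearEquiv
  have he (w : V) (i : Fin 2) : |e w i| ≤ ‖e‖ * ‖w‖ :=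
    (norm_le_pi_norm (e w) i).trans (e.le_opNorm w)
  refine ⟨‖e‖, norm_nonneg e, fun w => ⟨e w 0, e w 1, ?_, he w 0, he w 1⟩⟩
  have hsum := B.sum_equivFun w
  rw [Fin.sum_univ_two, hB] at hsum
  exact hsum.symm

lemma Rect.not_isPrimPos_of_mem_interior (hli : LinearIndependent ℝ ![vs, vu]) {R : Rect}
    {e : V} (he : e ∈ E) (hint : e ∈ R.interior vs vu) : ¬ R.IsPrimPos vs vu E := by
  intro hR
  obtain ⟨a, b, ha, has, hb, hbu, rfl⟩ := hint
  have hmem : R.p + a • vs + b • vu ∈ R.carrier vs vu ∩ E :=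
    ⟨⟨a, b, ha.le, has.le, hb.le, hbu.le, rfl⟩, he⟩
  rcases hR.2 ▸ hmem with hp | hinc
  · have := hli.eq_zero_of_pair (by simpa [add_assoc] using hp)
    exact ha.ne' this.1
  · have := hli.eq_of_pair (by simpa [Rect.incEnd, add_assoc] using hinc)
    exact has.ne this.1

lemma exists_isPrimPos_side_lt (hli : LinearIndependent ℝ ![vs, vu]) (hE : IsTorusFinite E) :
    ∃ K, 0 < K ∧ ∀ R : Rect, R.IsPrimPos vs vu E → R.s < K ∨ R.u < K := by
  obtain ⟨K, hK, hcoord⟩ := exists_coord_bound hli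
  refine ⟨K + 1, by linarith, fun R hR => ?_⟩
  by_contra! hbig
  -- a point of `E` within `1/2` of the centre of `R` lies in its interior
  set c := R.p + (R.s / 2) • vs + (R.u / 2) • vu
  obtain ⟨m, hm, hnear⟩ := exists_lattice_add_near R.p c
  obtain ⟨a, b, hab, ha, hb⟩ := hcoord (R.p + m - c)
  have hsmall : K * ‖R.p + m - c‖ ≤ K / 2 := by nlinarith
  rw [abs_le] at ha hb
  refine R.not_isPrimPos_of_mem_interior hli (hE.add_mem hR.1.1 hm)
    ⟨R.s / 2 + a, R.u / 2 + b, by linarith, by linarith, by linarith, by linarith, ?_⟩ hR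
  rw [sub_eq_iff_eq_add'.mp hab]
  module

lemma finite_lattice_inter {S : Set V} (hS : Bornology.IsBounded S) : (lattice ∩ S).Finite := by
  refine (ZSpan.setFinite_inter (Pi.basisFun ℝ (Fin 2)) hS).subset
    fun x ⟨hx, hxS⟩ => ⟨hxS, ?_⟩
  obtain ⟨m, rfl⟩ := hx
  rw [SetLike.mem_coe, Module.Basis.mem_span_iff_repr_mem]
  exact fun i => ⟨m i, by simp⟩

lemma IsTorusFinite.finite_inter (hE : IsTorusFinite E) {S : Set V} (hS : Bornology.IsBounded S) :
    (E ∩ S).Finite := by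
  obtain ⟨F, hF, rfl⟩ := hE
  refine (hF.add (finite_lattice_inter (isBounded_sub hS hF.isBounded))).subset ?_
  rintro _ ⟨⟨f, hf, m, hm, rfl⟩, hfm⟩
  exact ⟨f, hf, m, ⟨hm, f + m, hfm, f, hf, add_sub_cancel_left f m⟩, rfl⟩

lemma Rect.finite_setOf_p_incEnd (hli : LinearIndependent ℝ ![vs, vu]) {P Q : Set V}
    (hP : P.Finite) (hQ : Q.Finite) : {R : Rect | R.p ∈ P ∧ R.incEnd vs vu ∈ Q}.Finite := by
  refine (hP.prod hQ).preimage (f := fun R : Rect => (R.p, R.incEnd vs vu)) ?_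
  rintro R₁ - R₂ - hR
  obtain ⟨hp, hinc⟩ := Prod.mk.inj hR
  have hsu := hli.eq_of_pair (by simpa [Rect.incEnd, hp, add_assoc] using hinc)
  exact Rect.ext hp hsu.1 hsu.2

lemma Rect.norm_incEnd_le (R : Rect) :
    ‖R.incEnd vs vu‖ ≤ ‖R.p‖ + R.s * ‖vs‖ + R.u * ‖vu‖ := by
  refine (norm_add₃_le ..).trans_eq ?_
  rw [norm_smul, norm_smul, Real.norm_of_nonneg R.s_pos.le, Real.norm_of_nonneg R.u_pos.le]

structure HyperbolicFrame (A : Matrix (Fin 2) (Fin 2) ℤ) (lam : ℝ) (vs vu : V) : Prop where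
  det_eq_one : A.det = 1
  one_lt : 1 < lam
  vs_ne_zero : vs ≠ 0
  vu_ne_zero : vu ≠ 0
  actR_vs : actR A vs = lam⁻¹ • vs
  actR_vu : actR A vu = lam • vu

namespace HyperbolicFrame

lemma lam_pos (h : HyperbolicFrame A lam vs vu) : 0 < lam := zero_lt_one.trans h.one_lt

lemma neg_vs (h : HyperbolicFrame A lam vs vu) : HyperbolicFrame A lam (-vs) vu :=
  { h with
    vs_ne_zero := neg_ne_zero.mpr h.vs_ne_zero
    actR_vs := by rw [actR, Matrix.mulVec_neg, ← actR, h.actR_vs, smul_neg] }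

lemma linearIndependent (h : HyperbolicFrame A lam vs vu) : LinearIndependent ℝ ![vs, vu] := by
  have hne : lam⁻¹ ≠ lam := (inv_lt_one_of_one_lt₀ h.one_lt).trans h.one_lt |>.ne
  refine Module.End.eigenvectors_linearIndependent' (Matrix.toLin' (A.map (Int.cast : ℤ → ℝ)))
    ![lam⁻¹, lam] ?_ ![vs, vu] ?_
  · intro i j hij
    fin_cases i <;> fin_cases j <;> simp_all [eq_comm]
  · intro i
    fin_cases i
    · exact Module.End.hasEigenvector_iff.mpr ⟨Module.End.mem_eigenspace_iff.mpr h.actR_vs,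
        h.vs_ne_zero⟩
    · exact Module.End.hasEigenvector_iff.mpr ⟨Module.End.mem_eigenspace_iff.mpr h.actR_vu,
        h.vu_ne_zero⟩

lemma actRZ_vs (h : HyperbolicFrame A lam vs vu) (k : ℤ) : actRZ A k vs = lam ^ (-k) • vs := by
  rw [actRZ, Matrix.zpow_mulVec_of_mulVec_eq_smul (isUnit_det_map h.det_eq_one)
    (inv_ne_zero h.lam_pos.ne') h.actR_vs, _root_.inv_zpow']

lemma actRZ_vu (h : HyperbolicFrame A lam vs vu) (k : ℤ) : actRZ A k vu = lam ^ k • vu :=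
  Matrix.zpow_mulVec_of_mulVec_eq_smul (isUnit_det_map h.det_eq_one) h.lam_pos.ne' h.actR_vu k

lemma gMap_add_smul (h : HyperbolicFrame A lam vs vu) (k : ℤ) (z p : V) (a b : ℝ) :
    gMap A k z (p + a • vs + b • vu) =
      gMap A k z p + (lam ^ (-k) * a) • vs + (lam ^ k * b) • vu := by
  rw [gMap, gMap, actRZ_add, actRZ_add, actRZ_smul, actRZ_smul, h.actRZ_vs, h.actRZ_vu]
  module

noncomputable def transport (h : HyperbolicFrame A lam vs vu) (k : ℤ) (z : V) (R : Rect) :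
    Rect where
  p := gMap A k z R.p
  s := lam ^ (-k) * R.s
  u := lam ^ k * R.u
  s_pos := mul_pos (zpow_pos h.lam_pos _) R.s_pos
  u_pos := mul_pos (zpow_pos h.lam_pos _) R.u_pos

lemma carrier_transport (h : HyperbolicFrame A lam vs vu) (k : ℤ) (z : V) (R : Rect) :
    (h.transport k z R).carrier vs vu = gMap A k z '' R.carrier vs vu := by
  have hpos (j : ℤ) : 0 < lam ^ j := zpow_pos h.lam_pos j
  have hcancel (x : ℝ) : lam ^ k * (lam ^ (-k) * x) = x := by
    rw [← mul_assoc, ← zpow_add₀ h.lam_pos.ne', add_neg_cancel, zpow_zero, one_mul]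
  have hcancel' (x : ℝ) : lam ^ (-k) * (lam ^ k * x) = x := by
    rw [← mul_assoc, ← zpow_add₀ h.lam_pos.ne', neg_add_cancel, zpow_zero, one_mul]
  ext q
  constructor
  · rintro ⟨a, b, ha, has, hb, hbu, rfl⟩
    dsimp only [transport] at has hbu
    refine ⟨R.p + (lam ^ k * a) • vs + (lam ^ (-k) * b) • vu, ⟨lam ^ k * a, lam ^ (-k) * b,
      mul_nonneg (hpos _).le ha, ?_, mul_nonneg (hpos _).le hb, ?_, rfl⟩, ?_⟩
    · simpa only [hcancel] using mul_le_mul_of_nonneg_left has (hpos k).le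
    · simpa only [hcancel'] using mul_le_mul_of_nonneg_left hbu (hpos (-k)).le
    · rw [h.gMap_add_smul, hcancel, hcancel']
      rfl
  · rintro ⟨_, ⟨a, b, ha, has, hb, hbu, rfl⟩, rfl⟩
    exact ⟨lam ^ (-k) * a, lam ^ k * b, mul_nonneg (hpos _).le ha,
      mul_le_mul_of_nonneg_left has (hpos _).le, mul_nonneg (hpos _).le hb,
      mul_le_mul_of_nonneg_left hbu (hpos _).le, h.gMap_add_smul k z R.p a b⟩

lemma transport_incEnd (h : HyperbolicFrame A lam vs vu) (k : ℤ) (z : V) (R : Rect) :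
    (h.transport k z R).incEnd vs vu = gMap A k z (R.incEnd vs vu) :=
  (h.gMap_add_smul k z R.p R.s R.u).symm

lemma transport_isPrimPos (h : HyperbolicFrame A lam vs vu) (hE : IsTorusFinite E)
    (hEinv : IsInvariant A E) (k : ℤ) {z : V} (hz : z ∈ lattice) {R : Rect}
    (hR : R.IsPrimPos vs vu E) : (h.transport k z R).IsPrimPos vs vu E := by
  have hinj : Function.Injective (gMap A k z) :=
    Function.LeftInverse.injective (gMap_inv_gMap h.det_eq_one k z)
  rw [Rect.isPrimPos_iff] at hR ⊢
  rw [h.carrier_transport, ← gMap_image_of_isInvariant h.det_eq_one hE hEinv k hz,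
    ← Set.image_inter hinj, hR, Set.image_pair, transport_incEnd]
  rfl

lemma exists_isPrimPos_area_le (h : HyperbolicFrame A lam vs vu) (hE : IsTorusFinite E)
    (hEinv : IsInvariant A E) : ∃ C, ∀ R : Rect, R.IsPrimPos vs vu E → R.s * R.u ≤ C := by
  obtain ⟨K, hK, hside⟩ := exists_isPrimPos_side_lt h.linearIndependent hE
  refine ⟨lam * K ^ 2, fun R hR => ?_⟩
  by_contra! hbig
  obtain ⟨k, hk1, hk2⟩ := exists_zpow_neg_mul_mem_Ico h.one_lt R.s_pos hK
  have harea : (h.transport k 0 R).s * (h.transport k 0 R).u = R.s * R.u := by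
    simp only [transport]
    rw [mul_mul_mul_comm, ← zpow_add₀ h.lam_pos.ne', neg_add_cancel, zpow_zero, one_mul]
  rcases hside _ (h.transport_isPrimPos hE hEinv k zero_mem_lattice hR) with hs | hu
  · exact hs.not_ge hk1
  · have hsmall : (h.transport k 0 R).s * (h.transport k 0 R).u < lam * K * K := by
      calc _ < (h.transport k 0 R).s * K := mul_lt_mul_of_pos_left hu (h.transport k 0 R).s_pos
        _ ≤ lam * K * K := mul_le_mul_of_nonneg_right hk2.le hK.le
    nlinarith

theorem exists_finite_isPrimPos (h : HyperbolicFrame A lam vs vu) (hE : IsTorusFinite E)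
    (hEinv : IsInvariant A E) :
    ∃ F : Set Rect, F.Finite ∧ ∀ R : Rect, R.IsPrimPos vs vu E →
      ∃ R₀ ∈ F, ∃ g : V → V, GElem A g ∧ R.carrier vs vu = g '' R₀.carrier vs vu := by
  obtain ⟨C, hC⟩ := h.exists_isPrimPos_area_le hE hEinv
  obtain ⟨F₀, hF₀, hEeq⟩ := id hE
  obtain ⟨B, hB⟩ := hF₀.isBounded.subset_closedBall 0
  let r := B + lam * ‖vs‖ + C * ‖vu‖
  refine ⟨{R | R.p ∈ F₀ ∧ R.incEnd vs vu ∈ E ∩ Metric.closedBall 0 r},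
    Rect.finite_setOf_p_incEnd h.linearIndependent hF₀
      (hE.finite_inter Metric.isBounded_closedBall), fun R hR => ?_⟩
  obtain ⟨k, hk1, hk2⟩ := exists_zpow_neg_mul_mem_Ico h.one_lt R.s_pos one_pos
  have hpE : actRZ A k R.p ∈ F₀ + lattice := by
    rw [← hEeq, ← actRZ_image_of_isInvariant h.det_eq_one hEinv k]
    exact Set.mem_image_of_mem _ hR.1.1
  obtain ⟨f, hf, m, hm, hfm⟩ := hpE
  let R₀ := h.transport k (-m) R
  have hR₀ : R₀.IsPrimPos vs vu E := h.transport_isPrimPos hE hEinv k (neg_mem_lattice hm) hR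
  have hp₀ : R₀.p = f := by
    simp only [R₀, transport, gMap, ← hfm, add_neg_cancel_right]
  have hs₀ : 1 ≤ R₀.s := hk1
  have hu₀ : R₀.u ≤ C := by nlinarith [hC R₀ hR₀, R₀.u_pos]
  refine ⟨R₀, ⟨hp₀ ▸ hf, hR₀.1.2, ?_⟩, gMap A (-k) (-actRZ A (-k) (-m)),
    gElem_gMap (neg_mem_lattice (actRZ_mem_lattice h.det_eq_one _ (neg_mem_lattice hm))), ?_⟩
  · have hfB : ‖R₀.p‖ ≤ B := hp₀ ▸ mem_closedBall_zero_iff.mp (hB hf)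
    rw [mem_closedBall_zero_iff]
    refine R₀.norm_incEnd_le.trans (?_ : _ ≤ B + lam * ‖vs‖ + C * ‖vu‖)
    gcongr
    exact hk2.le.trans (mul_one lam).le
  · rw [h.carrier_transport, Set.image_image]
    simp only [gMap_inv_gMap h.det_eq_one, Set.image_id']

end HyperbolicFrame

theorem statement_2_general (A : Matrix (Fin 2) (Fin 2) ℤ) (hdet : A.det = 1)
    (lam : ℝ) (hlam : 1 < lam) (vs vu : V) (hvs : vs ≠ 0) (hvu : vu ≠ 0)
    (hAs : actR A vs = lam⁻¹ • vs) (hAu : actR A vu = lam • vu)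
    (E : Set V) (hEfin : IsTorusFinite E) (hEinv : IsInvariant A E) :
    ∃ F : Set Rect, F.Finite ∧
      ∀ R : Rect, (R.IsPrimPos vs vu E ∨ R.IsPrimNeg vs vu E) →
        ∃ R₀ ∈ F, ∃ g : V → V, GElem A g ∧
          R.carrier vs vu = g '' (R₀.carrier vs vu) := by
  have h : HyperbolicFrame A lam vs vu := ⟨hdet, hlam, hvs, hvu, hAs, hAu⟩
  obtain ⟨Fs, hFs, hpos⟩ := h.exists_finite_isPrimPos hEfin hEinv
  -- negative rectangles are the positive ones for the frame `(-vs, vu)`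
  obtain ⟨Fn, hFn, hneg⟩ := h.neg_vs.exists_finite_isPrimPos hEfin hEinv
  refine ⟨Fs ∪ Rect.reflect (-vs) '' Fn, hFs.union (hFn.image _), ?_⟩
  rintro R (hR | hR)
  · obtain ⟨R₀, hR₀, g, hg, hcarrier⟩ := hpos R hR
    exact ⟨R₀, Or.inl hR₀, g, hg, hcarrier⟩
  · obtain ⟨R₀, hR₀, g, hg, hcarrier⟩ := hneg _ (Rect.isPrimNeg_iff_reflect.mp hR)
    refine ⟨R₀.reflect (-vs), Or.inr ⟨R₀, hR₀, rfl⟩, g, hg, ?_⟩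
    rw [← Rect.carrier_reflect vs vu R, hcarrier, ← Rect.carrier_reflect (-vs) vu R₀, neg_neg]

/-- for a finite `f_A`-invariant set `ℰ`, there are finitely many
orbits of primitive `ℰ`-rectangles under the group `G`. -/
theorem statement_2 (A : Matrix (Fin 2) (Fin 2) ℤ) (hdet : A.det = 1) (htr : 2 < A.trace)
    (lam : ℝ) (hlam : 1 < lam) (vs vu : V) (hvs : vs ≠ 0) (hvu : vu ≠ 0)
    (hAs : actR A vs = lam⁻¹ • vs) (hAu : actR A vu = lam • vu)
    (E : Set V) (hEfin : IsTorusFinite E) (hEinv : IsInvariant A E) :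
    ∃ F : Set Rect, F.Finite ∧
      ∀ R : Rect, (R.IsPrimPos vs vu E ∨ R.IsPrimNeg vs vu E) →
        ∃ R₀ ∈ F, ∃ g : V → V, GElem A g ∧
          R.carrier vs vu = g '' (R₀.carrier vs vu) :=
  statement_2_general A hdet lam hlam vs vu hvs hvu hAs hAu E hEfin hEinv

end Paper
end

section
/- Let A be a 2×2 integer matrix with determinant 1 and trace > 2, and let 𝒳 ⊆ 𝕋² be a nonempty finite f_A-invariant set. Then there exists ε > 0 such that for every finite f_A-invariant set 𝒴 ⊆ 𝕋² that is ε-dense, every positive 𝒳-rectangle and every negative 𝒳-rectangle contains a point of the lift 𝒴̃. -/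
/- Common setup: following the paper, we identify each subset of the torus
`𝕋² = ℝ²/ℤ²` with its (`ℤ²`-saturated) lift to `ℝ²`. -/

open Matrix Set
open scoped Pointwise

namespace Paper

/-!
Write `ω` for the area form and `κ = (λ - λ⁻¹) ω(vs, vu)`. If `p, q ∈ 𝒳̃` and
`q - p = a vs + b vu` with `ab ≠ 0`, then `|ab|` is bounded below. If `q - p ∈ ℤ²`, then
`ω(q - p, A(q - p)) = abκ` is a nonzero integer. Otherwise the vectors
`Aⁿ(q - p) = λ⁻ⁿ a vs + λⁿ b vu`, `n ∈ ℤ`, are differences of points of the finite invariant set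
`𝒳` that are distinct on the torus, so they have norm at least some `δ > 0`; for a suitable `n`
that norm is `O(√|ab|)`. Hence every positive or negative `𝒳`-rectangle has area at least some
`c > 0`. A power of `A` maps such a rectangle onto one whose sides are both at least `√c / λ`,
which contains a point of every sufficiently dense `𝒴̃`; the inverse power, which preserves `𝒴̃`,
carries that point back into the original rectangle.
-/

lemma sub_mem_lattice {v w : V} (hv : v ∈ lattice) (hw : w ∈ lattice) : v - w ∈ lattice := by
  obtain ⟨m, rfl⟩ := hv
  obtain ⟨n, rfl⟩ := hw
  exact ⟨m - n, by ext; simp⟩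

lemma isClosed_lattice : IsClosed lattice := by
  have : lattice = Set.pi univ fun _ => range ((↑) : ℤ → ℝ) := by
    ext v
    simp only [lattice, mem_range, mem_pi, mem_univ, true_implies]
    refine ⟨fun ⟨m, hm⟩ i => ⟨m i, congrFun hm i⟩, fun h => ?_⟩
    choose m hm using h
    exact ⟨m, funext hm⟩
  rw [this]
  exact isClosed_set_pi fun _ _ => Real.isClosed_range_intCast

lemma actR_mem_lattice (M : Matrix (Fin 2) (Fin 2) ℤ) {v : V} (hv : v ∈ lattice) :
    actR M v ∈ lattice := by
  obtain ⟨m, rfl⟩ := hv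
  refine ⟨M *ᵥ m, funext fun i => ?_⟩
  simp [actR, Matrix.mulVec, dotProduct]

lemma IsTorusFinite.exists_pos_le_norm_sub {X : Set V} (hX : IsTorusFinite X) :
    ∃ δ > 0, ∀ p ∈ X, ∀ q ∈ X, q - p ∉ lattice → δ ≤ ‖q - p‖ := by
  obtain ⟨F, hF, rfl⟩ := hX
  set C : Set V := ⋃ f ∈ (F - F) \ lattice, (f - ·) ⁻¹' lattice
  have hC : IsClosed C := (hF.sub hF).sdiff.isClosed_biUnion fun f _ =>
    isClosed_lattice.preimage (continuous_const.sub continuous_id)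
  have h0 : (0 : V) ∈ Cᶜ := by simp [C]
  obtain ⟨δ, hδ, hball⟩ := Metric.isOpen_iff.mp hC.isOpen_compl 0 h0
  refine ⟨δ, hδ, ?_⟩
  rintro _ ⟨f₁, hf₁, m₁, hm₁, rfl⟩ _ ⟨f₂, hf₂, m₂, hm₂, rfl⟩ hnot
  have hdiff : f₂ + m₂ - (f₁ + m₁) = (f₂ - f₁) - (m₁ - m₂) := by abel
  have hm : m₁ - m₂ ∈ lattice := sub_mem_lattice hm₁ hm₂
  simp only [hdiff] at hnot ⊢
  have hmem : f₂ - f₁ - (m₁ - m₂) ∈ C :=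
    mem_biUnion ⟨sub_mem_sub hf₂ hf₁, fun hf => hnot (sub_mem_lattice hf hm)⟩ (by simpa using hm)
  by_contra! h
  exact hball (mem_ball_zero_iff.mpr h) hmem

def areaForm (v w : V) : ℝ := v 0 * w 1 - v 1 * w 0

lemma areaForm_ne_zero_of_linearIndependent {v w : V} (h : LinearIndependent ℝ ![v, w]) :
    areaForm v w ≠ 0 := by
  have hdet : (Matrix.of ![v, w]).det = areaForm v w := by
    simp [Matrix.det_fin_two, areaForm]
  rw [← hdet, ← isUnit_iff_ne_zero, ← Matrix.isUnit_iff_isUnit_det]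
  exact Matrix.linearIndependent_rows_iff_isUnit.mp h

lemma areaForm_ne_zero_of_eigen (f : Module.End ℝ V) {μ ν : ℝ} (hμν : μ ≠ ν) {vs vu : V}
    (hvs : vs ≠ 0) (hvu : vu ≠ 0) (hs : f vs = μ • vs) (hu : f vu = ν • vu) :
    areaForm vs vu ≠ 0 := by
  refine areaForm_ne_zero_of_linearIndependent
    (f.eigenvectors_linearIndependent' ![μ, ν] ?_ ![vs, vu] fun i => ?_)
  · intro i j hij
    fin_cases i <;> fin_cases j <;> simp_all [eq_comm]
  · fin_cases i
    · exact Module.End.hasEigenvector_iff.2 ⟨Module.End.mem_eigenspace_iff.2 hs, hvs⟩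
    · exact Module.End.hasEigenvector_iff.2 ⟨Module.End.mem_eigenspace_iff.2 hu, hvu⟩

/-- Cramer's rule. -/
lemma eq_areaForm_div_smul_add {vs vu : V} (hD : areaForm vs vu ≠ 0) (v : V) :
    v = (areaForm v vu / areaForm vs vu) • vs + (areaForm vs v / areaForm vs vu) • vu := by
  ext i
  fin_cases i <;>
  · rw [Pi.add_apply, Pi.smul_apply, Pi.smul_apply, smul_eq_mul, smul_eq_mul,
      div_mul_eq_mul_div, div_mul_eq_mul_div, ← add_div, eq_div_iff hD]
    simp only [areaForm, Fin.zero_eta, Fin.mk_one]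
    ring

lemma areaForm_apply_eigen (f : V →ₗ[ℝ] V) {μ ν : ℝ} {vs vu : V}
    (hs : f vs = μ • vs) (hu : f vu = ν • vu) (a b : ℝ) :
    areaForm (a • vs + b • vu) (f (a • vs + b • vu)) = a * b * ((ν - μ) * areaForm vs vu) := by
  simp only [map_add, map_smul, hs, hu, areaForm, Pi.add_apply, Pi.smul_apply, smul_eq_mul]
  ring

lemma areaForm_actR_mem_range_intCast (M : Matrix (Fin 2) (Fin 2) ℤ) {w : V}
    (hw : w ∈ lattice) : ∃ k : ℤ, areaForm w (actR M w) = k := by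
  obtain ⟨m, rfl⟩ := hw
  obtain ⟨n, hn⟩ := actR_mem_lattice M ⟨m, rfl⟩
  exact ⟨m 0 * n 1 - m 1 * n 0, by simp [areaForm, ← hn]⟩

lemma exists_pos_abs_coords_le_of_norm_le {vs vu : V} (hD : areaForm vs vu ≠ 0) {ρ : ℝ}
    (hρ : 0 < ρ) :
    ∃ ε > 0, ∀ w : V, ‖w‖ ≤ ε → ∃ a b : ℝ, w = a • vs + b • vu ∧ |a| ≤ ρ ∧ |b| ≤ ρ := by
  have hcont : Continuous fun w : V =>
      (areaForm w vu / areaForm vs vu, areaForm vs w / areaForm vs vu) := by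
    unfold areaForm
    fun_prop
  obtain ⟨δ, hδ, hsmall⟩ := Metric.continuousAt_iff.mp hcont.continuousAt ρ hρ
  refine ⟨δ / 2, half_pos hδ, fun w hw => ⟨_, _, eq_areaForm_div_smul_add hD w, ?_⟩⟩
  have := hsmall (x := w) (by rw [dist_zero_right]; linarith)
  simp only [Prod.dist_eq, Real.dist_eq, areaForm, Pi.zero_apply, zero_mul, mul_zero, sub_zero,
    zero_div, max_lt_iff] at this
  exact ⟨this.1.le, this.2.le⟩

lemma zpow_smul_mem_of_smul_set_eq {G α : Type*} [Group G] [MulAction G α] {g : G} {S : Set α}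
    (hS : g • S = S) (n : ℤ) {x : α} (hx : x ∈ S) : g ^ n • x ∈ S := by
  have hn : g ^ n ∈ MulAction.stabilizer G S := zpow_mem (MulAction.mem_stabilizer_iff.2 hS) n
  rw [← MulAction.mem_stabilizer_iff.1 hn]
  exact smul_mem_smul_set hx

lemma _root_.LinearEquiv.zpow_apply_of_apply_eq_smul {K M : Type*} [Field K] [AddCommGroup M]
    [Module K M] (T : M ≃ₗ[K] M) {μ : K} (hμ : μ ≠ 0) {v : M} (h : T v = μ • v) (n : ℤ) :
    (T ^ n) v = μ ^ n • v := by
  have hinv : (T⁻¹) v = μ⁻¹ • v := by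
    rw [LinearEquiv.coe_inv, LinearEquiv.symm_apply_eq, map_smul, h, smul_smul,
      inv_mul_cancel₀ hμ, one_smul]
  induction n using Int.induction_on with
  | zero => simp
  | succ n ih =>
    rw [_root_.zpow_add_one, LinearEquiv.mul_apply, h, map_smul, ih, smul_smul,
      zpow_add_one₀ hμ, mul_comm]
  | pred n ih =>
    rw [_root_.zpow_sub_one, LinearEquiv.mul_apply, hinv, map_smul, ih, smul_smul,
      zpow_sub_one₀ hμ, mul_comm]

def toLinEquiv : SpecialLinearGroup (Fin 2) ℤ →* V ≃ₗ[ℝ] V :=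
  SpecialLinearGroup.toLin'.comp (SpecialLinearGroup.map (Int.castRingHom ℝ))

lemma toLinEquiv_apply_mem_lattice_iff (g : SpecialLinearGroup (Fin 2) ℤ) {v : V} :
    toLinEquiv g v ∈ lattice ↔ v ∈ lattice := by
  refine ⟨fun h => ?_, actR_mem_lattice g⟩
  have hv : toLinEquiv g⁻¹ (toLinEquiv g v) = v := by
    rw [← LinearEquiv.mul_apply, ← map_mul, inv_mul_cancel, map_one]
    rfl
  exact hv ▸ actR_mem_lattice _ h

lemma IsInvariant.toLinEquiv_smul_set {g : SpecialLinearGroup (Fin 2) ℤ} {X : Set V}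
    (hX : IsInvariant g X) : toLinEquiv g • X = X :=
  image_smul.symm.trans hX

lemma le_one_add_mul_sqrt_of_forall_zpow {lam δ P Q : ℝ} (hlam : 1 < lam) (hP : 0 < P)
    (hQ : 0 < Q) (h : ∀ n : ℤ, δ ≤ lam ^ (-n) * P + lam ^ n * Q) :
    δ ≤ (1 + lam) * √(P * Q) := by
  set M := √(P * Q)
  have hM : 0 < M := Real.sqrt_pos.2 (mul_pos hP hQ)
  have hM2 : M ^ 2 = P * Q := Real.sq_sqrt (mul_pos hP hQ).le
  obtain ⟨n, hn₁, hn₂⟩ := exists_mem_Ico_zpow (div_pos hM hQ) hlam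
  have hpos : 0 < lam ^ n := zpow_pos (by linarith) n
  rw [le_div_iff₀ hQ] at hn₁
  rw [div_lt_iff₀ hQ, zpow_add_one₀ (by linarith)] at hn₂
  have hPn : lam ^ (-n) * P ≤ lam * M := by
    rw [_root_.zpow_neg, inv_mul_le_iff₀ hpos]
    nlinarith
  calc δ ≤ lam ^ (-n) * P + lam ^ n * Q := h n
    _ ≤ lam * M + M := by linarith
    _ = (1 + lam) * M := by ring

lemma norm_zpow_apply_le (T : V ≃ₗ[ℝ] V) {lam : ℝ} (hlam : 0 < lam) {vs vu : V}
    (hs : T vs = lam⁻¹ • vs) (hu : T vu = lam • vu) (a b : ℝ) (n : ℤ) :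
    ‖(T ^ n) (a • vs + b • vu)‖ ≤ lam ^ (-n) * (|a| * ‖vs‖) + lam ^ n * (|b| * ‖vu‖) := by
  rw [map_add, map_smul, map_smul, T.zpow_apply_of_apply_eq_smul (inv_ne_zero hlam.ne') hs,
    T.zpow_apply_of_apply_eq_smul hlam.ne' hu, _root_.inv_zpow', smul_smul, smul_smul]
  refine (norm_add_le _ _).trans_eq ?_
  rw [norm_smul, norm_smul, Real.norm_eq_abs, Real.norm_eq_abs, abs_mul, abs_mul,
    abs_of_pos (zpow_pos hlam _), abs_of_pos (zpow_pos hlam _)]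
  ring

lemma le_mul_sqrt_of_forall_le_norm_zpow (T : V ≃ₗ[ℝ] V) {lam δ : ℝ} (hlam : 1 < lam)
    {vs vu : V} (hvs : vs ≠ 0) (hvu : vu ≠ 0) (hs : T vs = lam⁻¹ • vs) (hu : T vu = lam • vu)
    {a b : ℝ} (ha : a ≠ 0) (hb : b ≠ 0) (h : ∀ n : ℤ, δ ≤ ‖(T ^ n) (a • vs + b • vu)‖) :
    δ ≤ (1 + lam) * √(|a| * ‖vs‖ * (|b| * ‖vu‖)) :=
  le_one_add_mul_sqrt_of_forall_zpow hlam (by positivity) (by positivity) fun n =>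
    (h n).trans (norm_zpow_apply_le T (by linarith) hs hu a b n)

lemma inv_abs_le_abs_mul_of_mem_lattice (M : Matrix (Fin 2) (Fin 2) ℤ) {μ ν : ℝ} {vs vu : V}
    (hs : actR M vs = μ • vs) (hu : actR M vu = ν • vu) {a b : ℝ}
    (hab : a * b * ((ν - μ) * areaForm vs vu) ≠ 0) (hw : a • vs + b • vu ∈ lattice) :
    |(ν - μ) * areaForm vs vu|⁻¹ ≤ |a| * |b| := by
  obtain ⟨k, hk⟩ := areaForm_actR_mem_range_intCast M hw
  rw [show actR M = Matrix.toLin' (M.map Int.cast) from rfl, areaForm_apply_eigen _ hs hu] at hk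
  have hk1 : (1 : ℝ) ≤ |(k : ℝ)| := by
    rw [← Int.cast_abs]
    exact_mod_cast Int.one_le_abs (by rintro rfl; exact hab (by simpa using hk))
  rw [inv_le_iff_one_le_mul₀ (abs_pos.2 (right_ne_zero_of_mul hab)), ← abs_mul, ← abs_mul, hk]
  exact hk1

lemma exists_pos_le_abs_mul_abs (g : SpecialLinearGroup (Fin 2) ℤ) {lam : ℝ}
    (hlam : 1 < lam) {vs vu : V} (hvs : vs ≠ 0) (hvu : vu ≠ 0) (hs : actR g vs = lam⁻¹ • vs)
    (hu : actR g vu = lam • vu) {X : Set V} (hXfin : IsTorusFinite X) (hXinv : IsInvariant g X) :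
    ∃ c > 0, ∀ p ∈ X, ∀ q ∈ X, ∀ a b : ℝ, a ≠ 0 → b ≠ 0 → q - p = a • vs + b • vu →
      c ≤ |a| * |b| := by
  set T := toLinEquiv g
  have hlam' : lam⁻¹ < lam := (inv_lt_one_of_one_lt₀ hlam).trans hlam
  have hκ : (lam - lam⁻¹) * areaForm vs vu ≠ 0 :=
    mul_ne_zero (sub_ne_zero.2 hlam'.ne') (areaForm_ne_zero_of_eigen T hlam'.ne hvs hvu hs hu)
  have hnorm : 0 < ‖vs‖ * ‖vu‖ := mul_pos (norm_pos_iff.2 hvs) (norm_pos_iff.2 hvu)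
  obtain ⟨δ, hδ, hsep⟩ := hXfin.exists_pos_le_norm_sub
  refine ⟨min |(lam - lam⁻¹) * areaForm vs vu|⁻¹ ((δ / (1 + lam)) ^ 2 / (‖vs‖ * ‖vu‖)),
    lt_min (by positivity) (by positivity), ?_⟩
  intro p hp q hq a b ha hb hpq
  by_cases hlat : q - p ∈ lattice
  · rw [hpq] at hlat
    exact (min_le_left _ _).trans
      (inv_abs_le_abs_mul_of_mem_lattice g hs hu (mul_ne_zero (mul_ne_zero ha hb) hκ) hlat)
  refine (min_le_right _ _).trans ?_
  have hXT : ∀ n : ℤ, ∀ x ∈ X, (T ^ n) x ∈ X := fun n _ hx =>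
    zpow_smul_mem_of_smul_set_eq hXinv.toLinEquiv_smul_set n hx
  have hδab := le_mul_sqrt_of_forall_le_norm_zpow T hlam hvs hvu hs hu ha hb fun n => by
    rw [← hpq, map_sub]
    refine hsep _ (hXT n p hp) _ (hXT n q hq) ?_
    rwa [← map_sub, ← map_zpow, toLinEquiv_apply_mem_lattice_iff]
  rw [← div_le_iff₀' (by linarith), Real.le_sqrt (by positivity) (by positivity)] at hδab
  rw [div_le_iff₀ hnorm]
  linear_combination hδab

lemma exists_zpow_le_of_sq_le_mul {lam r s u : ℝ} (hlam : 1 < lam) (hr : 0 < r) (hs : 0 < s)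
    (hsu : r ^ 2 ≤ s * u) : ∃ k : ℤ, r / lam ≤ lam⁻¹ ^ k * s ∧ r / lam ≤ lam ^ k * u := by
  obtain ⟨k, hk₁, hk₂⟩ := exists_mem_Ico_zpow (div_pos hs hr) hlam
  have hpos : 0 < lam ^ k := zpow_pos (by linarith) k
  rw [le_div_iff₀ hr] at hk₁
  rw [div_lt_iff₀ hr, zpow_add_one₀ (by linarith)] at hk₂
  refine ⟨k, ?_, ?_⟩
  · rw [_root_.inv_zpow, inv_mul_eq_div, le_div_iff₀ hpos, div_mul_eq_mul_div,
      div_le_iff₀ (by linarith)]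
    nlinarith
  · have hu : 0 < u := pos_of_mul_pos_right (lt_of_lt_of_le (by positivity) hsu) hs.le
    rw [div_le_iff₀ (by linarith)]
    nlinarith [mul_lt_mul_of_pos_right hk₂ hu]

lemma norm_le_euclNorm (v : V) : ‖v‖ ≤ euclNorm v :=
  (pi_norm_le_iff_of_nonneg (Real.sqrt_nonneg _)).2 fun i => by
    rw [Real.norm_eq_abs]
    apply Real.abs_le_sqrt
    fin_cases i <;> simp [sq_nonneg]

lemma EDense.inter_carrier_nonempty {ε ρ : ℝ} {Y : Set V} (hY : EDense ε Y) {vs vu : V}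
    (hsmall : ∀ w : V, ‖w‖ ≤ ε → ∃ a b : ℝ, w = a • vs + b • vu ∧ |a| ≤ ρ ∧ |b| ≤ ρ)
    {R : Rect} (hs : 2 * ρ ≤ R.s) (hu : 2 * ρ ≤ R.u) : (R.carrier vs vu ∩ Y).Nonempty := by
  set z := R.p + (R.s / 2) • vs + (R.u / 2) • vu
  obtain ⟨y, hyY, hy⟩ := hY z
  obtain ⟨a, b, hab, ha, hb⟩ :=
    hsmall (y - z) (by rw [norm_sub_rev]; exact (norm_le_euclNorm _).trans hy)
  rw [abs_le] at ha hb
  refine ⟨y, ⟨R.s / 2 + a, R.u / 2 + b, by linarith, by linarith, by linarith, by linarith, ?_⟩,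
    hyY⟩
  rw [sub_eq_iff_eq_add'] at hab
  rw [hab]
  module

namespace Rect

lemma le_s_mul_u {vs vu : V} {X : Set V} {c : ℝ}
    (harea : ∀ p ∈ X, ∀ q ∈ X, ∀ a b : ℝ, a ≠ 0 → b ≠ 0 → q - p = a • vs + b • vu →
      c ≤ |a| * |b|)
    {R : Rect} (hR : R.IsPos vs vu X ∨ R.IsNeg vs vu X) : c ≤ R.s * R.u := by
  rcases hR with ⟨hp, hq⟩ | ⟨hp, hq⟩
  · simpa [abs_of_pos R.s_pos, abs_of_pos R.u_pos] using
      harea _ hp _ hq R.s R.u R.s_pos.ne' R.u_pos.ne' (by simp only [incEnd]; abel)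
  · simpa [abs_of_pos R.s_pos, abs_of_pos R.u_pos] using
      harea _ hp _ hq (-R.s) R.u (neg_ne_zero.2 R.s_pos.ne') R.u_pos.ne'
        (by simp only [decOrigin, decEnd]; module)

/-- The image of `R` under `T ^ k` when `T vs = μ • vs` and `T vu = ν • vu`. -/
noncomputable def zpowImage (T : V ≃ₗ[ℝ] V) {μ ν : ℝ} (hμ : 0 < μ) (hν : 0 < ν) (k : ℤ)
    (R : Rect) : Rect where
  p := (T ^ k) R.p
  s := μ ^ k * R.s
  u := ν ^ k * R.u
  s_pos := mul_pos (zpow_pos hμ k) R.s_pos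
  u_pos := mul_pos (zpow_pos hν k) R.u_pos

lemma zpow_neg_mem_carrier (T : V ≃ₗ[ℝ] V) {μ ν : ℝ} (hμ : 0 < μ) (hν : 0 < ν) {vs vu : V}
    (hs : T vs = μ • vs) (hu : T vu = ν • vu) {k : ℤ} {R : Rect} {y : V}
    (hy : y ∈ (R.zpowImage T hμ hν k).carrier vs vu) : (T ^ (-k)) y ∈ R.carrier vs vu := by
  obtain ⟨a, b, ha₀, has, hb₀, hbu, rfl⟩ := hy
  dsimp only [zpowImage] at has hbu ⊢
  have hcancel : ∀ {t : ℝ}, 0 < t → t ^ (-k) * t ^ k = 1 := fun ht => by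
    rw [← zpow_add₀ ht.ne', neg_add_cancel, zpow_zero]
  refine ⟨μ ^ (-k) * a, ν ^ (-k) * b, by positivity, ?_, by positivity, ?_, ?_⟩
  · calc μ ^ (-k) * a ≤ μ ^ (-k) * (μ ^ k * R.s) := by gcongr
      _ = R.s := by rw [← mul_assoc, hcancel hμ, one_mul]
  · calc ν ^ (-k) * b ≤ ν ^ (-k) * (ν ^ k * R.u) := by gcongr
      _ = R.u := by rw [← mul_assoc, hcancel hν, one_mul]
  · rw [map_add, map_add, map_smul, map_smul, T.zpow_apply_of_apply_eq_smul hμ.ne' hs,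
      T.zpow_apply_of_apply_eq_smul hν.ne' hu, ← LinearEquiv.mul_apply, ← _root_.zpow_add,
      neg_add_cancel, zpow_zero, smul_smul, smul_smul, mul_comm a, mul_comm b]
    rfl

end Rect

theorem statement_3_general (A : Matrix (Fin 2) (Fin 2) ℤ) (hdet : A.det = 1)
    (lam : ℝ) (hlam : 1 < lam) (vs vu : V) (hvs : vs ≠ 0) (hvu : vu ≠ 0)
    (hAs : actR A vs = lam⁻¹ • vs) (hAu : actR A vu = lam • vu)
    (X : Set V) (hXfin : IsTorusFinite X) (hXinv : IsInvariant A X) :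
    ∃ ε : ℝ, 0 < ε ∧
      ∀ Y : Set V, IsTorusFinite Y → IsInvariant A Y → EDense ε Y →
        ∀ R : Rect, (R.IsPos vs vu X ∨ R.IsNeg vs vu X) →
          (R.carrier vs vu ∩ Y).Nonempty := by
  set g : SpecialLinearGroup (Fin 2) ℤ := ⟨A, hdet⟩
  set T := toLinEquiv g
  have hlam₀ : 0 < lam := by linarith
  have hD : areaForm vs vu ≠ 0 :=
    areaForm_ne_zero_of_eigen T ((inv_lt_one_of_one_lt₀ hlam).trans hlam).ne hvs hvu hAs hAu
  obtain ⟨c, hc, harea⟩ := exists_pos_le_abs_mul_abs g hlam hvs hvu hAs hAu hXfin hXinv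
  obtain ⟨ε, hε, hsmall⟩ :=
    exists_pos_abs_coords_le_of_norm_le hD (ρ := √c / lam / 2) (by positivity)
  refine ⟨ε, hε, fun Y _ hYinv hYdense R hR => ?_⟩
  obtain ⟨k, hks, hku⟩ := exists_zpow_le_of_sq_le_mul hlam (Real.sqrt_pos.2 hc) R.s_pos
    (by rw [Real.sq_sqrt hc.le]; exact Rect.le_s_mul_u harea hR)
  obtain ⟨y, hyR, hyY⟩ := hYdense.inter_carrier_nonempty hsmall
    (R := R.zpowImage T (inv_pos.2 hlam₀) hlam₀ k)
    (by rwa [mul_div_cancel₀ _ two_ne_zero]) (by rwa [mul_div_cancel₀ _ two_ne_zero])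
  exact ⟨(T ^ (-k)) y, Rect.zpow_neg_mem_carrier T _ _ hAs hAu hyR,
    zpow_smul_mem_of_smul_set_eq (IsInvariant.toLinEquiv_smul_set (g := g) hYinv) (-k) hyY⟩

/-- for a nonempty finite `f_A`-invariant set `𝒳` there is `ε > 0`
such that for every finite `f_A`-invariant `ε`-dense set `𝒴`, every positive and
every negative `𝒳`-rectangle contains a point of `𝒴̃`. -/
theorem statement_3 (A : Matrix (Fin 2) (Fin 2) ℤ) (hdet : A.det = 1) (htr : 2 < A.trace)
    (lam : ℝ) (hlam : 1 < lam) (vs vu : V) (hvs : vs ≠ 0) (hvu : vu ≠ 0)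
    (hAs : actR A vs = lam⁻¹ • vs) (hAu : actR A vu = lam • vu)
    (X : Set V) (hXne : X.Nonempty) (hXfin : IsTorusFinite X) (hXinv : IsInvariant A X) :
    ∃ ε : ℝ, 0 < ε ∧
      ∀ Y : Set V, IsTorusFinite Y → IsInvariant A Y → EDense ε Y →
        ∀ R : Rect, (R.IsPos vs vu X ∨ R.IsNeg vs vu X) →
          (R.carrier vs vu ∩ Y).Nonempty :=
  statement_3_general A hdet lam hlam vs vu hvs hvu hAs hAu X hXfin hXinv

end Paper
end
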